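/- Let R be a commutative ring, S a multiplicative subset, and P an R-module. Then Ext¹_R(P, M) is u-S-torsion for every R-module M if and only if for every surjective R-homomorphism g : B → C and every h : P → C, there exist α : P → B and s ∈ S with s·h = g ∘ α. -/

import Mathlib

open CategoryTheory

universe u

def IsUSTorsionMod {R : Type u} [CommRing R] (S : Submonoid R) (X : ModuleCat.{u} R) : Prop :=
  ∃ s ∈ S, ∀ x : X, s • x = 0

def IsUSTorsion {R : Type u} [CommRing R] (S : Submonoid R) (T : Type u)
    [AddCommGroup T] [Module R T] : Prop :=
  ∃ s ∈ S, ∀ x : T, s • x = 0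

noncomputable def ext (R : Type u) [CommRing R] (n : ℕ) (P M : ModuleCat.{u} R) :
    ModuleCat.{u} R :=
  ((Ext R (ModuleCat.{u} R) n).obj (Opposite.op P)).obj M

def IsUSProjective {R : Type u} [CommRing R] (S : Submonoid R) (P : Type u)
    [AddCommGroup P] [Module R P] : Prop :=
  ∀ M : ModuleCat.{u} R, IsUSTorsionMod S (ext R 1 (ModuleCat.of R P) M)

def IsUSInjective {R : Type u} [CommRing R] (S : Submonoid R) (E : Type u)
    [AddCommGroup E] [Module R E] : Prop :=
  ∀ M : ModuleCat.{u} R, IsUSTorsionMod S (ext R 1 M (ModuleCat.of R E))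

/-!
Fix a projective resolution `F• → P` with augmentation `π : F₀ → P`. Both conditions are
equivalent to `π` having an `s`-section: some `t : P → F₀` with `π ∘ t = s • id`, `s ∈ S`.
The lifting property yields `t` by lifting `id_P` along `π`; conversely, lift `h ∘ π` along `g`
(as `F₀` is projective) and precompose with `t`.
On the `Ext` side, `s` kills the class in `Ext¹(P, ker π)` of the cocycle `F₁ → ker π` induced
by `d₁`; this gives `r : F₀ → ker π` acting as `s` on `ker π`, and `s • id - r` descends to `t`.
Conversely, `s • id - t ∘ π` lands in `ker π = im d₁`, so it lifts to `β : F₀ → F₁`, and for any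
cocycle `q : F₁ → M` the coboundary of `q ∘ β` is `s • q`.
-/

section SmulSection

variable {R : Type*} [CommRing R] {F P : Type*} [AddCommGroup F] [Module R F]
  [AddCommGroup P] [Module R P] {π : F →ₗ[R] P}

lemma exists_comp_eq_smul_id_of_ker_retraction (hπ : Function.Surjective π) (s : R)
    (r : F →ₗ[R] LinearMap.ker π) (hr : ∀ x ∈ LinearMap.ker π, (r x : F) = s • x) :
    ∃ t : P →ₗ[R] F, π ∘ₗ t = s • LinearMap.id := by
  set φ : F →ₗ[R] F := s • LinearMap.id - (LinearMap.ker π).subtype ∘ₗ r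
  have hφ : LinearMap.ker π ≤ LinearMap.ker φ := fun x hx => by
    simp [φ, hr x hx]
  refine ⟨(LinearMap.ker π).liftQ φ hφ ∘ₗ
    (π.quotKerEquivOfSurjective hπ).symm.toLinearMap, ?_⟩
  ext p
  obtain ⟨x, rfl⟩ := hπ p
  have hx : (π.quotKerEquivOfSurjective hπ).symm (π x) = Submodule.Quotient.mk x :=
    (LinearEquiv.symm_apply_eq _).2 rfl
  simp [hx, φ]

lemma exists_smul_lift_of_comp_eq_smul_id [Module.Projective R F] {s : R} {t : P →ₗ[R] F}
    (ht : π ∘ₗ t = s • LinearMap.id) {B C : Type*} [AddCommGroup B] [Module R B]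
    [AddCommGroup C] [Module R C] {g : B →ₗ[R] C} (hg : Function.Surjective g)
    (h : P →ₗ[R] C) : ∃ α : P →ₗ[R] B, ∀ x, s • h x = g (α x) := by
  obtain ⟨w, hw⟩ := Module.projective_lifting_property g (h ∘ₗ π) hg
  refine ⟨w ∘ₗ t, fun x => ?_⟩
  rw [LinearMap.comp_apply, ← LinearMap.comp_apply g, hw, LinearMap.comp_apply,
    ← LinearMap.comp_apply π, ht]
  simp

lemma exists_comp_eq_of_range_le [Module.Projective R F] {F₁ : Type*} [AddCommGroup F₁]
    [Module R F₁] (d : F₁ →ₗ[R] P) (φ : F →ₗ[R] P) (h : LinearMap.range φ ≤ LinearMap.range d) :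
    ∃ β : F →ₗ[R] F₁, d ∘ₗ β = φ := by
  obtain ⟨β, hβ⟩ := Module.projective_lifting_property d.rangeRestrict
    (φ.codRestrict _ fun x => h ⟨x, rfl⟩) d.surjective_rangeRestrict
  exact ⟨β, LinearMap.ext fun x => congr((($hβ x : LinearMap.range d) : P))⟩

lemma exists_comp_eq_smul_of_comp_eq_smul_id [Module.Projective R F]
    {F₂ F₁ M : Type*} [AddCommGroup F₂] [Module R F₂] [AddCommGroup F₁] [Module R F₁]
    [AddCommGroup M] [Module R M] {d₂ : F₂ →ₗ[R] F₁} {d₁ : F₁ →ₗ[R] F}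
    (h₀ : LinearMap.ker π ≤ LinearMap.range d₁) (h₁ : LinearMap.ker d₁ ≤ LinearMap.range d₂)
    (hπd : π ∘ₗ d₁ = 0) {s : R} {t : P →ₗ[R] F} (ht : π ∘ₗ t = s • LinearMap.id)
    (q : F₁ →ₗ[R] M) (hq : q ∘ₗ d₂ = 0) : ∃ r : F →ₗ[R] M, r ∘ₗ d₁ = s • q := by
  obtain ⟨β, hβ⟩ := exists_comp_eq_of_range_le d₁ (s • LinearMap.id - t ∘ₗ π) <| by
    rintro _ ⟨x, rfl⟩
    apply h₀
    simp [LinearMap.mem_ker, ← LinearMap.comp_apply π t, ht]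
  refine ⟨q ∘ₗ β, LinearMap.ext fun x => ?_⟩
  have hker : β (d₁ x) - s • x ∈ LinearMap.ker d₁ := by
    simp [LinearMap.mem_ker, ← LinearMap.comp_apply d₁ β, hβ, ← LinearMap.comp_apply π d₁, hπd]
  obtain ⟨y, hy⟩ := h₁ hker
  have : q (β (d₁ x) - s • x) = 0 := by rw [← hy, ← LinearMap.comp_apply, hq, LinearMap.zero_apply]
  simpa [sub_eq_zero] using this

end SmulSection

section Resolution

variable {R : Type u} [CommRing R]

lemma IsUSTorsionMod.of_iso {S : Submonoid R} {X Y : ModuleCat.{u} R} (e : X ≅ Y)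
    (h : IsUSTorsionMod S X) : IsUSTorsionMod S Y := by
  obtain ⟨s, hs, h⟩ := h
  exact ⟨s, hs, fun y => by
    simpa only [map_smul, Iso.inv_hom_id_apply, map_zero] using congr(e.hom $(h (e.inv y)))⟩

variable {X : ModuleCat.{u} R} (Pres : ProjectiveResolution X)

lemma isUSTorsionMod_ext_one_iff (S : Submonoid R) (M : ModuleCat.{u} R) :
    IsUSTorsionMod S (ext R 1 X M) ↔
      ∃ s ∈ S, ∀ q : Pres.complex.X 1 →ₗ[R] M, q ∘ₗ (Pres.complex.d 2 1).hom = 0 →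
        ∃ r : Pres.complex.X 0 →ₗ[R] M, r ∘ₗ (Pres.complex.d 1 0).hom = s • q := by
  set K := (Pres.complex.linearYonedaObj R M).sc' 0 1 2
  have e : ext R 1 X M ≅ K.moduleCatLeftHomologyData.H :=
    Pres.isoExt 1 M ≪≫
      ShortComplex.homologyMapIso
        ((Pres.complex.linearYonedaObj R M).isoSc' 0 1 2 (by simp) (by simp)) ≪≫
      K.moduleCatHomologyIso
  rw [show IsUSTorsionMod S (ext R 1 X M) ↔ IsUSTorsionMod S K.moduleCatLeftHomologyData.H from
    ⟨.of_iso e, .of_iso e.symm⟩]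
  show (∃ s ∈ S, ∀ x : (LinearMap.ker K.g.hom ⧸ LinearMap.range K.moduleCatToCycles),
      s • x = 0) ↔ _
  constructor
  · rintro ⟨s, hs, h⟩
    refine ⟨s, hs, fun q hq => ?_⟩
    have hq' : ModuleCat.ofHom q ∈ LinearMap.ker K.g.hom := ModuleCat.hom_ext hq
    have h0 := h (Submodule.Quotient.mk ⟨ModuleCat.ofHom q, hq'⟩)
    rw [← Submodule.Quotient.mk_smul, Submodule.Quotient.mk_eq_zero] at h0
    obtain ⟨r, hr⟩ := h0
    exact ⟨r.hom, congr(($hr).val.hom)⟩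
  · rintro ⟨s, hs, h⟩
    refine ⟨s, hs, fun z => ?_⟩
    obtain ⟨⟨q, hq⟩, rfl⟩ := Submodule.Quotient.mk_surjective _ z
    rw [← Submodule.Quotient.mk_smul, Submodule.Quotient.mk_eq_zero]
    obtain ⟨r, hr⟩ := h q.hom congr(($(LinearMap.mem_ker.1 hq)).hom)
    exact ⟨ModuleCat.ofHom r, Subtype.ext (ModuleCat.hom_ext hr)⟩

lemma CategoryTheory.ProjectiveResolution.surjective_π_f_zero :
    Function.Surjective (Pres.π.f 0) :=
  (ModuleCat.epi_iff_surjective _).1 inferInstance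

lemma CategoryTheory.ProjectiveResolution.ker_π_f_zero_le_range :
    LinearMap.ker (Pres.π.f 0).hom ≤ LinearMap.range (Pres.complex.d 1 0).hom :=
  (ShortComplex.moduleCat_exact_iff_ker_sub_range _).1
    (ShortComplex.exact_of_g_is_cokernel (.mk _ _ Pres.complex_d_comp_π_f_zero)
      Pres.isColimitCokernelCofork)

lemma CategoryTheory.ProjectiveResolution.ker_d_one_le_range :
    LinearMap.ker (Pres.complex.d 1 0).hom ≤ LinearMap.range (Pres.complex.d 2 1).hom :=
  (ShortComplex.moduleCat_exact_iff_ker_sub_range _).1 (Pres.exact_succ 0)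

instance CategoryTheory.ProjectiveResolution.projective_X (n : ℕ) :
    Module.Projective R (Pres.complex.X n) :=
  (IsProjective.iff_projective _).2 (Pres.projective n)

lemma isUSProjective_iff_exists_comp_eq_smul_id {S : Submonoid R} {P : Type u}
    [AddCommGroup P] [Module R P] (Pres : ProjectiveResolution (ModuleCat.of R P)) :
    IsUSProjective S P ↔
      ∃ s ∈ S, ∃ t : P →ₗ[R] Pres.complex.X 0, (Pres.π.f 0).hom ∘ₗ t = s • LinearMap.id := by
  have hπd : (Pres.π.f 0).hom ∘ₗ (Pres.complex.d 1 0).hom = 0 :=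
    congr(($Pres.complex_d_comp_π_f_zero).hom)
  constructor
  · intro hP
    set π := (Pres.π.f 0).hom
    obtain ⟨s, hs, h⟩ := (isUSTorsionMod_ext_one_iff Pres S (.of R (LinearMap.ker π))).1
      (hP (.of R (LinearMap.ker π)))
    have hq : (Pres.complex.d 1 0).hom.codRestrict (LinearMap.ker π)
        (fun y => LinearMap.mem_ker.2 congr($hπd y)) ∘ₗ
        (Pres.complex.d 2 1).hom = 0 :=
      LinearMap.ext fun z => Subtype.ext congr(($(Pres.complex.d_comp_d 2 1 0)).hom z)
    obtain ⟨r, hr⟩ := h _ hq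
    refine ⟨s, hs, exists_comp_eq_smul_id_of_ker_retraction Pres.surjective_π_f_zero s r ?_⟩
    rintro _ hx
    obtain ⟨y, rfl⟩ := Pres.ker_π_f_zero_le_range hx
    exact congr(($hr y : Pres.complex.X 0))
  · rintro ⟨s, hs, t, ht⟩ M
    exact (isUSTorsionMod_ext_one_iff Pres S M).2 ⟨s, hs, exists_comp_eq_smul_of_comp_eq_smul_id
      Pres.ker_π_f_zero_le_range Pres.ker_d_one_le_range hπd ht⟩

end Resolution

lemma forall_exists_smul_lift_iff {R : Type u} [CommRing R] (S : Submonoid R)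
    {F P : Type u} [AddCommGroup F] [Module R F] [Module.Projective R F]
    [AddCommGroup P] [Module R P] {π : F →ₗ[R] P} (hπ : Function.Surjective π) :
    (∀ (B C : Type u) [AddCommGroup B] [Module R B] [AddCommGroup C] [Module R C]
        (g : B →ₗ[R] C), Function.Surjective g →
        ∀ h : P →ₗ[R] C, ∃ (α : P →ₗ[R] B), ∃ s ∈ S, ∀ x : P, s • h x = g (α x)) ↔
      ∃ s ∈ S, ∃ t : P →ₗ[R] F, π ∘ₗ t = s • LinearMap.id := by
  constructor
  · intro h
    obtain ⟨t, s, hs, ht⟩ := h F P π hπ LinearMap.id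
    exact ⟨s, hs, t, LinearMap.ext fun x => (ht x).symm⟩
  · rintro ⟨s, hs, t, ht⟩ B C _ _ _ _ g hg h
    obtain ⟨α, hα⟩ := exists_smul_lift_of_comp_eq_smul_id ht hg h
    exact ⟨α, s, hs, hα⟩

/-- `Ext¹(P, M)` is `u`-`S`-torsion for all `M` iff maps from `P` lift
along surjections up to multiplication by some `s ∈ S`. -/
theorem uS_projective_iff_lifting
    {R : Type u} [CommRing R] (S : Submonoid R)
    (P : Type u) [AddCommGroup P] [Module R P] :
    IsUSProjective S P ↔
      ∀ (B C : Type u) [AddCommGroup B] [Module R B] [AddCommGroup C] [Module R C]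
        (g : B →ₗ[R] C), Function.Surjective g →
        ∀ h : P →ₗ[R] C, ∃ (α : P →ₗ[R] B), ∃ s ∈ S, ∀ x : P, s • h x = g (α x) := by
  obtain ⟨Pres⟩ : Nonempty (ProjectiveResolution (ModuleCat.of R P)) :=
    HasProjectiveResolution.out
  rw [isUSProjective_iff_exists_comp_eq_smul_id Pres]
  exact (forall_exists_smul_lift_iff S Pres.surjective_π_f_zero).symm
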